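/- arXiv:1908.10557 — 4 statements merged into one kernel-verified Lean document; each statement's English description precedes it below -/
import Mathlib

section
/- If the sequence {a_t} minimizes ∑_{t=0}^∞ β^t ℓ(a_t) over all sequences with a_t ≥ 0 for all t and ∑_{t=0}^∞ a_t = x̂, then {a_t} is monotone decreasing, and for every index T one has a_{T+1} = 0 if and only if a_T ≤ η. -/
open Set Filter ENNReal

/-- Total discounted loss `∑_{t=0}^∞ β^t ℓ(a_t)` of an action sequence, valued in `ℝ≥0∞`
(divergent sums are `∞`; the losses `ℓ(a_t)` are nonnegative for feasible sequences). -/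
noncomputable def totalLoss (β : ℝ) (ℓ : ℝ → ℝ) (a : ℕ → ℝ) : ℝ≥0∞ :=
  ∑' t, ENNReal.ofReal (β ^ t * ℓ (a t))

/-- A sequence is feasible for remaining stock `x` if it is nonnegative and sums to `x`. -/
def Feasible (x : ℝ) (a : ℕ → ℝ) : Prop :=
  (∀ t, 0 ≤ a t) ∧ HasSum a x

/-!
Moving a small amount `ε` of stock from period `t` to period `s` keeps a sequence feasible, so at
an optimum the discounted cost `β^s ℓ(a_s + ε) + β^t ℓ(a_t - ε)` is minimal at `ε = 0`, giving the
first-order condition `β^t ℓ'(a_t) ≤ β^s ℓ'(a_s)` whenever `a_t > 0`. For consecutive periods this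
reads `β ℓ'(a_{T+1}) ≤ ℓ'(a_T)` if `a_{T+1} > 0` and `ℓ'(a_T) ≤ β ℓ'(a_{T+1})` if `a_T > 0`; since
`ℓ'` is positive and strictly increasing and `β > 1`, the first forbids `a_T < a_{T+1}`, and the
two together say that `a_{T+1} = 0` exactly when `ℓ'(a_T) ≤ β ℓ'(0)`, i.e. when `a_T ≤ η`.
-/

lemma ENNReal.sum_le_sum_of_tsum_le_tsum {α : Type*} {f g : α → ℝ≥0∞} (s : Finset α)
    (hfg : ∀ i ∉ s, f i = g i) (hf : ∑' i, f i ≠ ∞) (hle : ∑' i, f i ≤ ∑' i, g i) :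
    ∑ i ∈ s, f i ≤ ∑ i ∈ s, g i := by
  have hrest : ∑' i : ↥(s : Set α)ᶜ, f i ≠ ∞ :=
    ne_top_of_le_ne_top hf (ENNReal.sum_add_tsum_compl s f ▸ le_add_self)
  rw [← ENNReal.sum_add_tsum_compl s f, ← ENNReal.sum_add_tsum_compl s g,
    tsum_congr fun i : ↥(s : Set α)ᶜ => (hfg i i.2).symm] at hle
  exact (ENNReal.add_le_add_iff_right hrest).mp hle

lemma HasDerivAt.nonneg_of_isLocalMinOn_Ici {f : ℝ → ℝ} {f' a : ℝ} (hf : HasDerivAt f f' a)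
    (hmin : IsLocalMinOn f (Ici a) a) : 0 ≤ f' := by
  have hone : (1 : ℝ) ∈ posTangentConeAt (Ici a) a :=
    mem_posTangentConeAt_of_segment_subset <|
      (segment_subset_Icc (by simp)).trans Icc_subset_Ici_self
  simpa using hmin.hasFDerivWithinAt_nonneg hf.hasFDerivAt.hasFDerivWithinAt hone

lemma nonneg_of_hasDerivAt_nonneg {f f' : ℝ → ℝ} {b : ℝ} (hf : ∀ y ∈ Icc 0 b, HasDerivAt f (f' y) y)
    (hf' : ∀ y ∈ Icc 0 b, 0 ≤ f' y) (h0 : f 0 = 0) {y : ℝ} (hy : y ∈ Icc 0 b) : 0 ≤ f y := by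
  have hmono : MonotoneOn f (Icc 0 b) :=
    monotoneOn_of_hasDerivWithinAt_nonneg (convex_Icc 0 b)
      (fun z hz => (hf z hz).continuousAt.continuousWithinAt)
      (fun z hz => (hf z (interior_subset hz)).hasDerivWithinAt)
      (fun z hz => hf' z (interior_subset hz))
  exact h0 ▸ hmono (left_mem_Icc.mpr (hy.1.trans hy.2)) hy hy.1

namespace Feasible

variable {x : ℝ} {a : ℕ → ℝ}

lemma total_nonneg (h : Feasible x a) : 0 ≤ x := h.2.nonneg h.1

lemma mem_Icc (h : Feasible x a) (t : ℕ) : a t ∈ Icc 0 x :=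
  ⟨h.1 t, le_hasSum h.2 t fun i _ => h.1 i⟩

lemma pi_single (hx : 0 ≤ x) (i : ℕ) : Feasible x (Pi.single i x) := by
  refine ⟨fun t => ?_, hasSum_pi_single i x⟩
  rcases eq_or_ne t i with rfl | hti
  · simpa using hx
  · simp [hti]

lemma transfer (h : Feasible x a) (s : ℕ) {t : ℕ} {ε : ℝ} (hε : 0 ≤ ε) (hεt : ε ≤ a t) :
    Feasible x (a + Pi.single s ε - Pi.single t ε) := by
  refine ⟨fun n => ?_, add_sub_cancel_right x ε ▸
    (h.2.add (hasSum_pi_single s ε)).sub (hasSum_pi_single t ε)⟩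
  have hs : 0 ≤ Pi.single (M := fun _ => ℝ) s ε n := by
    rcases eq_or_ne n s with rfl | hns <;> simp [*]
  have ht : Pi.single (M := fun _ => ℝ) t ε n ≤ a n := by
    rcases eq_or_ne n t with rfl | hnt
    · simpa using hεt
    · simpa [hnt] using h.1 n
  simp only [Pi.sub_apply, Pi.add_apply]
  linarith

end Feasible

lemma totalLoss_pi_single {β : ℝ} {ℓ : ℝ → ℝ} (hℓ0 : ℓ 0 = 0) (i : ℕ) (x : ℝ) :
    totalLoss β ℓ (Pi.single i x) = ENNReal.ofReal (β ^ i * ℓ x) := by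
  refine (tsum_eq_single i fun n hni => ?_).trans (by simp)
  simp [hni, hℓ0]

def IsOptimal (x β : ℝ) (ℓ : ℝ → ℝ) (a : ℕ → ℝ) : Prop :=
  Feasible x a ∧ ∀ a' : ℕ → ℝ, Feasible x a' → totalLoss β ℓ a ≤ totalLoss β ℓ a'

namespace IsOptimal

variable {x β : ℝ} {ℓ ℓd : ℝ → ℝ} {a : ℕ → ℝ} {s t : ℕ}

lemma totalLoss_ne_top (h : IsOptimal x β ℓ a) (hℓ0 : ℓ 0 = 0) : totalLoss β ℓ a ≠ ∞ := by
  have := h.2 _ (Feasible.pi_single h.1.total_nonneg 0)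
  rw [totalLoss_pi_single hℓ0] at this
  exact ne_top_of_le_ne_top ofReal_ne_top this

lemma exchange (h : IsOptimal x β ℓ a) (hβ : 0 ≤ β) (hℓ : ∀ y ∈ Icc 0 x, 0 ≤ ℓ y)
    (hℓ0 : ℓ 0 = 0) (hst : s ≠ t) {ε : ℝ} (hε : 0 ≤ ε) (hεt : ε ≤ a t) :
    β ^ s * ℓ (a s) + β ^ t * ℓ (a t) ≤ β ^ s * ℓ (a s + ε) + β ^ t * ℓ (a t - ε) := by
  set a' := a + Pi.single s ε - Pi.single t ε
  have hfeas' : Feasible x a' := h.1.transfer s hε hεt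
  have hterm : ∀ b : ℕ → ℝ, Feasible x b → ∀ n, 0 ≤ β ^ n * ℓ (b n) :=
    fun b hb n => mul_nonneg (pow_nonneg hβ n) (hℓ _ (hb.mem_Icc n))
  have hpair := ENNReal.sum_le_sum_of_tsum_le_tsum {s, t}
    (f := fun n => ENNReal.ofReal (β ^ n * ℓ (a n)))
    (g := fun n => ENNReal.ofReal (β ^ n * ℓ (a' n)))
    (fun n hn => by simp_all [a']) (h.totalLoss_ne_top hℓ0) (h.2 a' hfeas')
  rw [← ofReal_sum_of_nonneg fun n _ => hterm a h.1 n,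
    ← ofReal_sum_of_nonneg fun n _ => hterm a' hfeas' n,
    ofReal_le_ofReal_iff (Finset.sum_nonneg fun n _ => hterm a' hfeas' n),
    Finset.sum_pair hst, Finset.sum_pair hst] at hpair
  simpa [a', Pi.single_apply, hst, hst.symm, sub_eq_add_neg] using hpair

lemma marginal_le (h : IsOptimal x β ℓ a) (hβ : 0 ≤ β) (hℓ : ∀ y ∈ Icc 0 x, 0 ≤ ℓ y)
    (hℓ0 : ℓ 0 = 0) (hderiv : ∀ y ∈ Icc 0 x, HasDerivAt ℓ (ℓd y) y) (hst : s ≠ t)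
    (hat : 0 < a t) : β ^ t * ℓd (a t) ≤ β ^ s * ℓd (a s) := by
  set φ : ℝ → ℝ := fun ε => β ^ s * ℓ (a s + ε) + β ^ t * ℓ (a t - ε)
  have hφ : HasDerivAt φ (β ^ s * ℓd (a s) + β ^ t * -ℓd (a t)) 0 := by
    have hs := HasDerivAt.comp_const_add (a s) 0 (by simpa using hderiv _ (h.1.mem_Icc s))
    have ht := HasDerivAt.comp_const_sub (a t) 0 (by simpa using hderiv _ (h.1.mem_Icc t))
    exact (hs.const_mul _).add (ht.const_mul _)
  have hmin : IsLocalMinOn φ (Ici 0) 0 := by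
    filter_upwards [Icc_mem_nhdsGE hat] with ε hε
    simpa [φ] using h.exchange hβ hℓ hℓ0 hst hε.1 hε.2
  linarith [hφ.nonneg_of_isLocalMinOn_Ici hmin]

lemma marginal_succ_le (h : IsOptimal x β ℓ a) (hβ : 0 < β) (hℓ : ∀ y ∈ Icc 0 x, 0 ≤ ℓ y)
    (hℓ0 : ℓ 0 = 0) (hderiv : ∀ y ∈ Icc 0 x, HasDerivAt ℓ (ℓd y) y) {T : ℕ}
    (hT : 0 < a (T + 1)) : β * ℓd (a (T + 1)) ≤ ℓd (a T) := by
  have := h.marginal_le hβ.le hℓ hℓ0 hderiv (Nat.succ_ne_self T).symm hT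
  rw [pow_succ, mul_assoc] at this
  exact le_of_mul_le_mul_left this (pow_pos hβ T)

lemma marginal_le_succ (h : IsOptimal x β ℓ a) (hβ : 0 < β) (hℓ : ∀ y ∈ Icc 0 x, 0 ≤ ℓ y)
    (hℓ0 : ℓ 0 = 0) (hderiv : ∀ y ∈ Icc 0 x, HasDerivAt ℓ (ℓd y) y) {T : ℕ}
    (hT : 0 < a T) : ℓd (a T) ≤ β * ℓd (a (T + 1)) := by
  have := h.marginal_le hβ.le hℓ hℓ0 hderiv (Nat.succ_ne_self T) hT
  rw [pow_succ, mul_assoc] at this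
  exact le_of_mul_le_mul_left this (pow_pos hβ T)

end IsOptimal

theorem optimal_sequence_decreasing_and_stopping_rule_general
    (xhat : ℝ)
    (ℓ ℓd : ℝ → ℝ)
    (hderiv : ∀ x ∈ Set.Icc 0 xhat, HasDerivAt ℓ (ℓd x) x)
    (hconv : StrictConvexOn ℝ (Set.Icc 0 xhat) ℓ)
    (hzero : ℓ 0 = 0)
    (hpos : ∀ x ∈ Set.Icc 0 xhat, 0 < ℓd x)
    (β : ℝ) (hβ : 1 < β)
    (η : ℝ)
    (hη_mem : η ∈ Set.Icc 0 xhat ∧ ℓd η ≤ β * ℓd 0)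
    (hη_max : ∀ x ∈ Set.Icc 0 xhat, ℓd x ≤ β * ℓd 0 → x ≤ η)
    (a : ℕ → ℝ)
    (hfeas : Feasible xhat a)
    (hmin : ∀ a' : ℕ → ℝ, Feasible xhat a' → totalLoss β ℓ a ≤ totalLoss β ℓ a') :
    Antitone a ∧ ∀ T : ℕ, (a (T + 1) = 0 ↔ a T ≤ η) := by
  have hopt : IsOptimal xhat β ℓ a := ⟨hfeas, hmin⟩
  have hβ0 : 0 < β := zero_lt_one.trans hβ
  have h0 : (0 : ℝ) ∈ Icc 0 xhat := left_mem_Icc.mpr hfeas.total_nonneg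
  have hℓ : ∀ y ∈ Icc 0 xhat, 0 ≤ ℓ y :=
    fun y => nonneg_of_hasDerivAt_nonneg hderiv (fun z hz => (hpos z hz).le) hzero
  have hmono : StrictMonoOn ℓd (Icc 0 xhat) :=
    (hconv.strictMonoOn_deriv fun y hy => (hderiv y hy).differentiableAt).congr
      fun y hy => (hderiv y hy).deriv
  refine ⟨antitone_nat_of_succ_le fun T => ?_, fun T => ⟨fun hT => ?_, fun hT => ?_⟩⟩
  · by_contra! hlt
    have hpos' : 0 < a (T + 1) := (hfeas.1 T).trans_lt hlt
    refine lt_irrefl (β * ℓd (a (T + 1))) ?_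
    calc β * ℓd (a (T + 1)) ≤ ℓd (a T) := hopt.marginal_succ_le hβ0 hℓ hzero hderiv hpos'
      _ < ℓd (a (T + 1)) := hmono (hfeas.mem_Icc T) (hfeas.mem_Icc (T + 1)) hlt
      _ < β * ℓd (a (T + 1)) := lt_mul_of_one_lt_left (hpos _ (hfeas.mem_Icc _)) hβ
  · rcases (hfeas.1 T).eq_or_lt with hT0 | hpos'
    · exact hT0 ▸ hη_mem.1.1
    · exact hη_max _ (hfeas.mem_Icc T) (hT ▸ hopt.marginal_le_succ hβ0 hℓ hzero hderiv hpos')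
  · by_contra hne
    have hpos' : 0 < a (T + 1) := (hfeas.1 _).lt_of_ne' hne
    refine lt_irrefl (β * ℓd (a (T + 1))) ?_
    calc β * ℓd (a (T + 1)) ≤ ℓd (a T) := hopt.marginal_succ_le hβ0 hℓ hzero hderiv hpos'
      _ ≤ ℓd η := hmono.monotoneOn (hfeas.mem_Icc T) hη_mem.1 hT
      _ ≤ β * ℓd 0 := hη_mem.2
      _ < β * ℓd (a (T + 1)) := by gcongr; exact hmono h0 (hfeas.mem_Icc _) hpos'

/-- any minimizer `{a_t}` of the negative discount dynamic program is
monotone decreasing, and for every index `T` one has `a_{T+1} = 0` iff `a_T ≤ η`. -/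
theorem optimal_sequence_decreasing_and_stopping_rule
    (xhat : ℝ) (hxhat : 0 < xhat)
    (ℓ ℓd : ℝ → ℝ)
    (hderiv : ∀ x ∈ Set.Icc 0 xhat, HasDerivAt ℓ (ℓd x) x)
    (hcont_deriv : ContinuousOn ℓd (Set.Icc 0 xhat))
    (hconv : StrictConvexOn ℝ (Set.Icc 0 xhat) ℓ)
    (hzero : ℓ 0 = 0)
    (hpos : ∀ x ∈ Set.Icc 0 xhat, 0 < ℓd x)
    (β : ℝ) (hβ : 1 < β)
    (η : ℝ)
    (hη_mem : η ∈ Set.Icc 0 xhat ∧ ℓd η ≤ β * ℓd 0)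
    (hη_max : ∀ x ∈ Set.Icc 0 xhat, ℓd x ≤ β * ℓd 0 → x ≤ η)
    (a : ℕ → ℝ)
    (hfeas : Feasible xhat a)
    (hmin : ∀ a' : ℕ → ℝ, Feasible xhat a' → totalLoss β ℓ a ≤ totalLoss β ℓ a') :
    Antitone a ∧ ∀ T : ℕ, (a (T + 1) = 0 ↔ a T ≤ η) :=
  optimal_sequence_decreasing_and_stopping_rule_general xhat ℓ ℓd hderiv hconv hzero hpos β hβ η
    hη_mem hη_max a hfeas hmin
end

section
/- Let c(s) = s^γ with γ > 1, let k = 2, let τ > 0, and set θ := (1+τ)^{1/(1−γ)}; assume θ < 1/2. Then the function W(s) = (1 − 2θ)^{γ−1}·s^γ satisfies the city-network Bellman equation W(s) = min_{0 ≤ t ≤ s} { c(s − t) + (1+τ)·2·W(t/2) } for all s ∈ [0, 1], and the sequence v_i = θ^i (1 − 2θ)·s attains the minimum in the planner problem W(s) = min { ∑_{i=0}^∞ (1+τ)^i 2^i c(v_i) : v_i ≥ 0 and ∑_{i=0}^∞ 2^i v_i = s }. -/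
open Set Filter ENNReal Real

/-- Total cost `∑_{i=0}^∞ (1+τ)^i 2^i c(v_i)` of a city hierarchy with sizes `v_i` on
layer `i` (with `2^i` cities on layer `i`), valued in `ℝ≥0∞`. -/
noncomputable def cityCost (τ : ℝ) (c : ℝ → ℝ) (v : ℕ → ℝ) : ℝ≥0∞ :=
  ∑' i, ENNReal.ofReal ((1 + τ) ^ i * (2 : ℝ) ^ i * c (v i))

/-- A city-size sequence is feasible for population `s` if it is nonnegative and the
layer sizes `2^i v_i` sum to `s`. -/
def CityFeasible (s : ℝ) (v : ℕ → ℝ) : Prop :=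
  (∀ i, 0 ≤ v i) ∧ HasSum (fun i => (2 : ℝ) ^ i * v i) s

/-- `(x^n)^γ = (x^γ)^n` for nonnegative `x`. -/
lemma city_pow_rpow {x : ℝ} (hx : 0 ≤ x) (n : ℕ) (γ : ℝ) :
    (x ^ n) ^ γ = (x ^ γ) ^ n := by
  rw [← Real.rpow_natCast x n, ← Real.rpow_natCast (x ^ γ) n, ← Real.rpow_mul hx,
    ← Real.rpow_mul hx, mul_comm]

/-- Key two-point convexity inequality. -/
lemma city_key {γ τ θ : ℝ} (hγ : 1 < γ) (hθpos : 0 < θ) (hθhalf : θ < 1 / 2)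
    (hpow : θ ^ (1 - γ) = 1 + τ)
    {a b : ℝ} (ha : 0 ≤ a) (hb : 0 ≤ b) :
    (1 - 2 * θ) ^ (γ - 1) * (a + 2 * b) ^ γ
      ≤ a ^ γ + (1 + τ) * 2 * ((1 - 2 * θ) ^ (γ - 1) * b ^ γ) := by
  set L : ℝ := 1 - 2 * θ with hLdef
  have hL : 0 < L := by simp only [hLdef]; linarith
  have hM : 0 < 2 * θ := by linarith
  have hcx := (convexOn_rpow hγ.le).2 (Set.mem_Ici.2 (div_nonneg ha hL.le))
    (Set.mem_Ici.2 (div_nonneg hb hθpos.le)) hL.le hM.le (by ring)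
  simp only [smul_eq_mul] at hcx
  rw [mul_div_cancel₀ _ hL.ne'] at hcx
  have h2b : 2 * θ * (b / θ) = 2 * b := by field_simp
  rw [h2b] at hcx
  -- hcx : (a + 2*b)^γ ≤ L * (a/L)^γ + 2*θ * (b/θ)^γ
  have hALpos : (0:ℝ) < L ^ (γ - 1) := Real.rpow_pos_of_pos hL _
  have e1 : L ^ (γ - 1) * (L * (a / L) ^ γ) = a ^ γ := by
    rw [Real.div_rpow ha hL.le]
    rw [show L ^ (γ - 1) * (L * (a ^ γ / L ^ γ)) = (L ^ (γ - 1) * L) * (a ^ γ / L ^ γ) from by ring]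
    rw [show L ^ (γ - 1) * L = L ^ γ from by
      rw [← Real.rpow_add_one hL.ne' (γ - 1)]; norm_num]
    field_simp
  have e2 : L ^ (γ - 1) * (2 * θ * (b / θ) ^ γ) = (1 + τ) * 2 * (L ^ (γ - 1) * b ^ γ) := by
    rw [Real.div_rpow hb hθpos.le, ← hpow, Real.rpow_sub hθpos, Real.rpow_one]
    have hθγ : (0:ℝ) < θ ^ γ := Real.rpow_pos_of_pos hθpos _
    field_simp
  calc L ^ (γ - 1) * (a + 2 * b) ^ γ
      ≤ L ^ (γ - 1) * (L * (a / L) ^ γ + 2 * θ * (b / θ) ^ γ) := by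
        exact mul_le_mul_of_nonneg_left hcx hALpos.le
    _ = a ^ γ + (1 + τ) * 2 * (L ^ (γ - 1) * b ^ γ) := by rw [mul_add, e1, e2]

/-- with `c(s) = s^γ`, `k = 2`, `θ = (1+τ)^{1/(1−γ)} < 1/2`, the function
`W(s) = (1 − 2θ)^{γ−1} s^γ` satisfies the city-network Bellman equation, and the sequence
`v_i = θ^i (1 − 2θ) s` attains the minimum in the planner problem. -/
theorem city_network_closed_form
    (γ : ℝ) (hγ : 1 < γ)
    (τ : ℝ) (hτ : 0 < τ)
    (c : ℝ → ℝ) (hc : ∀ s : ℝ, c s = s ^ γ)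
    (θ : ℝ) (hθ : θ = (1 + τ) ^ (1 / (1 - γ)))
    (hθhalf : θ < 1 / 2)
    (W : ℝ → ℝ) (hW : ∀ s : ℝ, W s = (1 - 2 * θ) ^ (γ - 1) * s ^ γ) :
    ∀ s ∈ Set.Icc (0 : ℝ) 1,
      ((∀ t ∈ Set.Icc 0 s, W s ≤ c (s - t) + (1 + τ) * 2 * W (t / 2)) ∧
        (∃ t ∈ Set.Icc 0 s, W s = c (s - t) + (1 + τ) * 2 * W (t / 2))) ∧
      (CityFeasible s (fun i => θ ^ i * (1 - 2 * θ) * s) ∧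
        HasSum
          (fun i => (1 + τ) ^ i * (2 : ℝ) ^ i * c (θ ^ i * (1 - 2 * θ) * s)) (W s) ∧
        (∀ u : ℕ → ℝ, CityFeasible s u →
          cityCost τ c (fun i => θ ^ i * (1 - 2 * θ) * s) ≤ cityCost τ c u)) := by
  have h1τ : (0:ℝ) < 1 + τ := by linarith
  have hθpos : 0 < θ := hθ ▸ Real.rpow_pos_of_pos h1τ _
  have hγne : 1 - γ ≠ 0 := by intro h; linarith [sub_eq_zero.mp h]
  have hpow : θ ^ (1 - γ) = 1 + τ := by
    rw [hθ, ← Real.rpow_mul h1τ.le, one_div, inv_mul_cancel₀ hγne, Real.rpow_one]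
  have hθτ : (1 + τ) * θ ^ γ = θ := by
    rw [← hpow, ← Real.rpow_add hθpos, sub_add_cancel, Real.rpow_one]
  have hL : (0:ℝ) < 1 - 2 * θ := by linarith
  set A : ℝ := (1 - 2 * θ) ^ (γ - 1) with hAdef
  have hApos : 0 < A := Real.rpow_pos_of_pos hL _
  have hAL : A * (1 - 2 * θ) = (1 - 2 * θ) ^ γ := by
    rw [hAdef, ← Real.rpow_add_one hL.ne' (γ - 1)]
    norm_num
  intro s hs
  obtain ⟨hs0, hs1⟩ := hs
  -- key helper: the term identity
  have hterm : ∀ i : ℕ, (1 + τ) ^ i * (2:ℝ) ^ i * c (θ ^ i * (1 - 2 * θ) * s)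
      = (2 * θ) ^ i * ((1 - 2 * θ) ^ γ * s ^ γ) := by
    intro i
    rw [hc, mul_assoc (θ ^ i),
      Real.mul_rpow (pow_nonneg hθpos.le i) (mul_nonneg hL.le hs0),
      Real.mul_rpow hL.le hs0, city_pow_rpow hθpos.le]
    have hpi : (1 + τ) ^ i * (θ ^ γ) ^ i = θ ^ i := by rw [← mul_pow, hθτ]
    rw [mul_pow 2 θ]
    linear_combination ((2:ℝ) ^ i * ((1 - 2 * θ) ^ γ * s ^ γ)) * hpi
  have hgeo : HasSum (fun i : ℕ => (2 * θ) ^ i) (1 - 2 * θ)⁻¹ := by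
    have := hasSum_geometric_of_lt_one (by positivity) (by linarith : 2 * θ < 1)
    simpa using this
  -- cost HasSum
  have hcost : HasSum (fun i => (1 + τ) ^ i * (2:ℝ) ^ i * c (θ ^ i * (1 - 2 * θ) * s)) (W s) := by
    have h2 := hgeo.mul_right ((1 - 2 * θ) ^ γ * s ^ γ)
    have hval : (1 - 2 * θ)⁻¹ * ((1 - 2 * θ) ^ γ * s ^ γ) = W s := by
      rw [hW, hAdef, Real.rpow_sub hL, Real.rpow_one]
      field_simp
    rw [hval] at h2
    have hfe : (fun i => (1 + τ) ^ i * (2:ℝ) ^ i * c (θ ^ i * (1 - 2 * θ) * s))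
        = fun i => (2 * θ) ^ i * ((1 - 2 * θ) ^ γ * s ^ γ) := funext hterm
    rw [hfe]; exact h2
  -- feasibility of v
  have hfeas : CityFeasible s (fun i => θ ^ i * (1 - 2 * θ) * s) := by
    constructor
    · intro i; exact mul_nonneg (mul_nonneg (pow_nonneg hθpos.le i) hL.le) hs0
    · have h2 := hgeo.mul_right ((1 - 2 * θ) * s)
      have hval : (1 - 2 * θ)⁻¹ * ((1 - 2 * θ) * s) = s := by field_simp
      rw [hval] at h2
      have hfe : (fun i => (2:ℝ) ^ i * (θ ^ i * (1 - 2 * θ) * s))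
          = fun i => (2 * θ) ^ i * ((1 - 2 * θ) * s) := by
        funext i; rw [mul_pow]; ring
      rw [show (fun i => (2:ℝ) ^ i * ((fun i => θ ^ i * (1 - 2 * θ) * s) i)) =
        fun i => (2 * θ) ^ i * ((1 - 2 * θ) * s) from hfe]
      exact h2
  refine ⟨⟨?_, ?_⟩, hfeas, hcost, ?_⟩
  · -- Bellman inequality
    intro t ht
    obtain ⟨ht0, hts⟩ := ht
    have hk := city_key hγ hθpos hθhalf hpow (sub_nonneg.2 hts) (by linarith : (0:ℝ) ≤ t / 2)
    rw [show s - t + 2 * (t / 2) = s from by ring] at hk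
    rw [hW s, hW (t / 2), hc]
    exact hk
  · -- Bellman equality at t = 2θs
    refine ⟨2 * θ * s, ⟨by positivity, by nlinarith⟩, ?_⟩
    rw [hW s, hW (2 * θ * s / 2), hc]
    rw [show s - 2 * θ * s = (1 - 2 * θ) * s from by ring,
      show 2 * θ * s / 2 = θ * s from by ring,
      Real.mul_rpow hL.le hs0, Real.mul_rpow hθpos.le hs0]
    linear_combination s ^ γ * hAL - 2 * A * s ^ γ * hθτ
  · -- optimality
    intro u hu
    obtain ⟨hu0, husum⟩ := hu
    have hvW : cityCost τ c (fun i => θ ^ i * (1 - 2 * θ) * s) = ENNReal.ofReal (W s) := by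
      have hnn : ∀ i : ℕ, 0 ≤ (1 + τ) ^ i * (2:ℝ) ^ i * c (θ ^ i * (1 - 2 * θ) * s) := by
        intro i
        rw [hterm i]
        have : (0:ℝ) ≤ (1 - 2 * θ) ^ γ := Real.rpow_nonneg hL.le γ
        have : (0:ℝ) ≤ s ^ γ := Real.rpow_nonneg hs0 γ
        positivity
      simp only [cityCost]
      rw [← ENNReal.ofReal_tsum_of_nonneg hnn hcost.summable, hcost.tsum_eq]
    rw [hvW]
    have main : ∀ n : ℕ, ∀ w : ℕ → ℝ, (∀ i, 0 ≤ w i) →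
        A * (∑ i ∈ Finset.range n, (2:ℝ) ^ i * w i) ^ γ
          ≤ ∑ i ∈ Finset.range n, (1 + τ) ^ i * (2:ℝ) ^ i * w i ^ γ := by
      intro n
      induction n with
      | zero =>
        intro w hw
        simp [Real.zero_rpow (by linarith : γ ≠ 0)]
      | succ n ih =>
        intro w hw
        rw [Finset.sum_range_succ', Finset.sum_range_succ']
        set q := ∑ i ∈ Finset.range n, (2:ℝ) ^ i * w (i + 1) with hqdef
        have hq0 : 0 ≤ q := Finset.sum_nonneg fun i _ => mul_nonneg (by positivity) (hw _)
        have hsum1 : ∑ i ∈ Finset.range n, (2:ℝ) ^ (i + 1) * w (i + 1) = 2 * q := by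
          rw [hqdef, Finset.mul_sum]
          exact Finset.sum_congr rfl fun i _ => by ring
        have hk := city_key hγ hθpos hθhalf hpow (hw 0) hq0
        have hih := ih (fun i => w (i + 1)) (fun i => hw _)
        have hsum2 : ∑ i ∈ Finset.range n, (1 + τ) ^ (i + 1) * (2:ℝ) ^ (i + 1) * w (i + 1) ^ γ
            = (1 + τ) * 2 * ∑ i ∈ Finset.range n, (1 + τ) ^ i * (2:ℝ) ^ i * w (i + 1) ^ γ := by
          rw [Finset.mul_sum]
          exact Finset.sum_congr rfl fun i _ => by ring
        rw [hsum1, hsum2]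
        simp only [pow_zero, one_mul]
        have step1 : A * (2 * q + w 0) ^ γ ≤ w 0 ^ γ + (1 + τ) * 2 * (A * q ^ γ) := by
          rw [show 2 * q + w 0 = w 0 + 2 * q from by ring]
          exact hk
        have step2 : (1 + τ) * 2 * (A * q ^ γ)
            ≤ (1 + τ) * 2 * ∑ i ∈ Finset.range n, (1 + τ) ^ i * (2:ℝ) ^ i * w (i + 1) ^ γ :=
          mul_le_mul_of_nonneg_left hih (by positivity)
        linarith
    have hunn : ∀ i : ℕ, 0 ≤ (1 + τ) ^ i * (2:ℝ) ^ i * (u i) ^ γ := by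
      intro i
      have := Real.rpow_nonneg (hu0 i) γ
      positivity
    have hle : ∀ n : ℕ,
        ENNReal.ofReal (A * (∑ i ∈ Finset.range n, (2:ℝ) ^ i * u i) ^ γ) ≤ cityCost τ c u := by
      intro n
      calc ENNReal.ofReal (A * (∑ i ∈ Finset.range n, (2:ℝ) ^ i * u i) ^ γ)
          ≤ ENNReal.ofReal (∑ i ∈ Finset.range n, (1 + τ) ^ i * (2:ℝ) ^ i * u i ^ γ) :=
            ENNReal.ofReal_le_ofReal (main n u hu0)
        _ = ∑ i ∈ Finset.range n, ENNReal.ofReal ((1 + τ) ^ i * (2:ℝ) ^ i * u i ^ γ) :=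
            ENNReal.ofReal_sum_of_nonneg fun i _ => hunn i
        _ = ∑ i ∈ Finset.range n, ENNReal.ofReal ((1 + τ) ^ i * (2:ℝ) ^ i * c (u i)) := by
            simp [hc]
        _ ≤ cityCost τ c u := ENNReal.sum_le_tsum _
    have hpn := husum.tendsto_sum_nat
    have htend : Tendsto
        (fun n => ENNReal.ofReal (A * (∑ i ∈ Finset.range n, (2:ℝ) ^ i * u i) ^ γ)) atTop
        (nhds (ENNReal.ofReal (A * s ^ γ))) := by
      apply ENNReal.tendsto_ofReal
      exact Tendsto.const_mul A
        ((Real.continuousAt_rpow_const s γ (Or.inr (by linarith))).tendsto.comp hpn)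
    have hfin := le_of_tendsto htend (Filter.Eventually.of_forall hle)
    rw [hW]
    exact hfin
end

section
/- Let (L, G) be a dynamic program satisfying assumptions A₁–A₅ and let T be its Bellman operator, (Tw)(x) = inf_{a ∈ G(x)} L(x, a, w). Then: (1) T has a unique fixed point w* in 𝓘 := { f : X → ℝ continuous, φ ≤ f ≤ ψ }; and (2) for each w ∈ 𝓘 there exist α ∈ [0, 1) and M < ∞ such that sup_{x ∈ X} |(Tⁿw)(x) − w*(x)| ≤ αⁿ·M for all n ∈ ℕ. -/
/-!
The Bellman operator `T` maps continuous functions to continuous functions (Berge's maximum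
theorem), is monotone (A₂) and concave (A₃). Concavity and A₅ give inductively
`(1 - (1 - ε)ⁿ) (Tⁿψ - φ) ≤ Tⁿφ - φ`, so the increasing sequence `Tⁿφ` and the decreasing
sequence `Tⁿψ` are at most `(1 - ε)ⁿ (ψ - φ)` apart. Every `w ∈ 𝓘` and `w* = infₙ Tⁿψ` are
squeezed between them; this gives the geometric rate, continuity of `w*` as a uniform limit,
`T w* = w*` (as `T w*` is squeezed too) and uniqueness.
-/

open Set Filter Topology

theorem IsCompact.sInf_image_le {A : Type*} [TopologicalSpace A] {K : Set A} {g : A → ℝ}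
    (hK : IsCompact K) (hg : ContinuousOn g K) {a : A} (ha : a ∈ K) : sInf (g '' K) ≤ g a :=
  csInf_le (hK.image_of_continuousOn hg).bddBelow (mem_image_of_mem g ha)

section Berge

variable {X A : Type*} [TopologicalSpace X] [TopologicalSpace A] {G : X → Set A}
  {f : X → A → ℝ}

theorem ContinuousOn.section_of_graph
    (hf : ContinuousOn (fun p : X × A => f p.1 p.2) {p | p.2 ∈ G p.1}) (x : X) :
    ContinuousOn (f x) (G x) :=
  hf.comp (Continuous.prodMk_right x).continuousOn fun _ ha => ha

theorem LowerHemicontinuous.upperSemicontinuous_sInf_image (hG : LowerHemicontinuous G)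
    (hG_ne : ∀ x, (G x).Nonempty) (hG_cpt : ∀ x, IsCompact (G x))
    (hf : ContinuousOn (fun p : X × A => f p.1 p.2) {p | p.2 ∈ G p.1}) :
    UpperSemicontinuous fun x => sInf (f x '' G x) := by
  intro x₀ y hy
  obtain ⟨_, ⟨a₀, ha₀, rfl⟩, hlt⟩ := exists_lt_of_csInf_lt ((hG_ne x₀).image _) hy
  have hN : ∀ᶠ p : X × A in 𝓝 (x₀, a₀), p.2 ∈ G p.1 → f p.1 p.2 < y :=
    eventually_nhdsWithin_iff.1 ((hf _ ha₀).eventually_lt_const hlt)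
  obtain ⟨U, V, hU, hx₀, hV, ha₀V, hUV⟩ := mem_nhds_prod_iff'.1 hN
  filter_upwards [hU.mem_nhds hx₀, lowerHemicontinuousAt_iff.1 (hG x₀) V hV ⟨a₀, ha₀, ha₀V⟩]
    with x hx ⟨a, ha, haV⟩
  exact ((hG_cpt x).sInf_image_le (hf.section_of_graph x) ha).trans_lt (hUV (mk_mem_prod hx haV) ha)

theorem UpperHemicontinuous.lowerSemicontinuous_sInf_image (hG : UpperHemicontinuous G)
    (hG_ne : ∀ x, (G x).Nonempty) (hG_cpt : ∀ x, IsCompact (G x))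
    (hf : ContinuousOn (fun p : X × A => f p.1 p.2) {p | p.2 ∈ G p.1}) :
    LowerSemicontinuous fun x => sInf (f x '' G x) := by
  intro x₀ y hy
  -- tube lemma: a neighbourhood of the compact set `{x₀} ×ˢ G x₀` contains a product
  have hN : {p : X × A | p.2 ∈ G p.1 → y < f p.1 p.2} ∈ 𝓝 x₀ ×ˢ 𝓝ˢ (G x₀) := by
    rw [← nhdsSet_singleton, ← isCompact_singleton.nhdsSet_prod_eq (hG_cpt x₀),
      mem_nhdsSet_iff_forall]
    rintro ⟨x, a⟩ ⟨rfl : x = x₀, ha⟩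
    exact eventually_nhdsWithin_iff.1 ((hf _ ha).eventually_const_lt
      (hy.trans_le ((hG_cpt x).sInf_image_le (hf.section_of_graph x) ha)))
  obtain ⟨U, hU, V, hV, hUV⟩ := mem_prod_iff.1 hN
  filter_upwards [hU, hG x₀ V hV] with x hx hVx
  obtain ⟨a, ha, heq⟩ := (hG_cpt x).exists_sInf_image_eq (hG_ne x) (hf.section_of_graph x)
  rw [heq]
  exact hUV (mk_mem_prod hx (subset_of_mem_nhdsSet hVx ha)) ha

theorem continuous_sInf_image_of_hemicontinuous (hG_uhc : UpperHemicontinuous G)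
    (hG_lhc : LowerHemicontinuous G) (hG_ne : ∀ x, (G x).Nonempty)
    (hG_cpt : ∀ x, IsCompact (G x))
    (hf : ContinuousOn (fun p : X × A => f p.1 p.2) {p | p.2 ∈ G p.1}) :
    Continuous fun x => sInf (f x '' G x) :=
  continuous_iff_lower_upperSemicontinuous.2
    ⟨hG_uhc.lowerSemicontinuous_sInf_image hG_ne hG_cpt hf,
      hG_lhc.upperSemicontinuous_sInf_image hG_ne hG_cpt hf⟩

end Berge

theorem MonotoneOn.iterate {α : Type*} [Preorder α] {f : α → α} {s : Set α}
    (hf : MonotoneOn f s) (hs : MapsTo f s s) (n : ℕ) : MonotoneOn f^[n] s := by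
  induction n with
  | zero => exact monotoneOn_id
  | succ n ih => rw [Function.iterate_succ']; exact hf.comp ih (hs.iterate n)

theorem MonotoneOn.mapsTo_inter_Icc {α : Type*} [Preorder α] {f : α → α} {s : Set α} {a b : α}
    (hf : MonotoneOn f s) (hs : MapsTo f s s) (ha : a ∈ s) (hb : b ∈ s) (hfa : a ≤ f a)
    (hfb : f b ≤ b) : MapsTo f (s ∩ Icc a b) (s ∩ Icc a b) :=
  fun _ ⟨hw, hlo, hhi⟩ => ⟨hs hw, hfa.trans (hf ha hw hlo), (hf hw hb hhi).trans hfb⟩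

theorem eq_of_forall_abs_sub_le_pow_mul {a b β c : ℝ} (hβ₀ : 0 ≤ β) (hβ₁ : β < 1)
    (h : ∀ n : ℕ, |a - b| ≤ β ^ n * c) : a = b := by
  have hlim : Tendsto (fun n : ℕ => β ^ n * c) atTop (𝓝 0) := by
    simpa using (tendsto_pow_atTop_nhds_zero_of_lt_one hβ₀ hβ₁).mul_const c
  exact sub_eq_zero.1 (abs_nonpos_iff.1 (ge_of_tendsto' hlim h))

theorem continuous_of_forall_abs_sub_le {X : Type*} [TopologicalSpace X] {F : ℕ → X → ℝ}
    {g : X → ℝ} {r : ℕ → ℝ} (hF : ∀ n, Continuous (F n)) (hr : Tendsto r atTop (𝓝 0))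
    (hFg : ∀ n x, |F n x - g x| ≤ r n) : Continuous g := by
  refine TendstoUniformly.continuous (F := F) (p := atTop) ?_ (.of_forall hF)
  rw [Metric.tendstoUniformly_iff]
  intro e he
  filter_upwards [hr.eventually (gt_mem_nhds he)] with n hn x
  rw [Real.dist_eq, abs_sub_comm]
  exact (hFg n x).trans_lt hn

theorem convex_setOf_continuous {X : Type*} [TopologicalSpace X] :
    Convex ℝ {w : X → ℝ | Continuous w} :=
  fun _ hu _ hv a b _ _ _ => (hu.const_smul a).add (hv.const_smul b)

section ConcaveOperator

variable {X : Type*} [TopologicalSpace X] {T : (X → ℝ) → X → ℝ} {φ ψ : X → ℝ} {ε : ℝ}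

def continuousIcc (φ ψ : X → ℝ) : Set (X → ℝ) := {w | Continuous w} ∩ Icc φ ψ

theorem ConcaveOn.le_sub_of_le_sub (hmono : MonotoneOn T {w | Continuous w})
    (hconc : ConcaveOn ℝ {w | Continuous w} T) (hφ : Continuous φ) (hε : 0 ≤ ε)
    (hTφ : ∀ x, φ x + ε * (ψ x - φ x) ≤ T φ x) {μ : ℝ} (hμ₀ : 0 ≤ μ) (hμ₁ : μ ≤ 1)
    {u v : X → ℝ} (hu : Continuous u) (hv : Continuous v) (hTv : ∀ x, T v x ≤ ψ x)
    (huv : ∀ x, (1 - μ) * (v x - φ x) ≤ u x - φ x) (x : X) :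
    (1 - μ * (1 - ε)) * (T v x - φ x) ≤ T u x - φ x := by
  have hmix : Continuous ((1 - μ) • v + μ • φ) := (hv.const_smul _).add (hφ.const_smul _)
  have hmono' : T ((1 - μ) • v + μ • φ) x ≤ T u x :=
    hmono hmix hu (fun y => show (1 - μ) * v y + μ * φ y ≤ u y by linarith [huv y]) x
  have hconc' : (1 - μ) * T v x + μ * T φ x ≤ T ((1 - μ) • v + μ • φ) x :=
    hconc.2 hv hφ (by linarith) hμ₀ (by ring) x
  linarith [mul_nonneg hμ₀ (sub_nonneg.2 (hTφ x)),
    mul_nonneg (mul_nonneg hμ₀ hε) (sub_nonneg.2 (hTv x))]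

theorem iterate_sub_iterate_le (hS : MapsTo T {w | Continuous w} {w | Continuous w})
    (hmono : MonotoneOn T {w | Continuous w}) (hconc : ConcaveOn ℝ {w | Continuous w} T)
    (hI : MapsTo T (continuousIcc φ ψ) (continuousIcc φ ψ)) (hφ : Continuous φ)
    (hψ : ψ ∈ continuousIcc φ ψ) (hε₀ : 0 ≤ ε) (hε₁ : ε ≤ 1)
    (hTφ : ∀ x, φ x + ε * (ψ x - φ x) ≤ T φ x) (n : ℕ) (x : X) :
    T^[n] ψ x - T^[n] φ x ≤ (1 - ε) ^ n * (ψ x - φ x) := by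
  have hβ : ∀ n, 0 ≤ (1 - ε) ^ n := fun n => pow_nonneg (by linarith) n
  have hψn : ∀ n x, T^[n] ψ x ≤ ψ x := fun n x => (hI.iterate n hψ).2.2 x
  have hlower : ∀ n x, (1 - (1 - ε) ^ n) * (T^[n] ψ x - φ x) ≤ T^[n] φ x - φ x := by
    intro n
    induction n with
    | zero => simp
    | succ n ih =>
      intro x
      rw [Function.iterate_succ_apply', Function.iterate_succ_apply', pow_succ]
      refine hconc.le_sub_of_le_sub hmono hφ hε₀ hTφ (hβ n)
        (pow_le_one₀ (by linarith) (by linarith)) (hS.iterate n hφ) (hS.iterate n hψ.1)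
        (fun y => ?_) ih x
      simpa only [Function.iterate_succ_apply'] using hψn (n + 1) y
  linarith [hlower n x, mul_nonneg (hβ n) (sub_nonneg.2 (hψn n x))]

theorem iInf_iterate_le (hI : MapsTo T (continuousIcc φ ψ) (continuousIcc φ ψ))
    (hψ : ψ ∈ continuousIcc φ ψ) (n : ℕ) (x : X) : ⨅ k, T^[k] ψ x ≤ T^[n] ψ x :=
  ciInf_le ⟨φ x, forall_mem_range.2 fun k => (hI.iterate k hψ).2.1 x⟩ n

theorem iterate_le_iInf_iterate (hS : MapsTo T {w | Continuous w} {w | Continuous w})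
    (hmono : MonotoneOn T {w | Continuous w})
    (hI : MapsTo T (continuousIcc φ ψ) (continuousIcc φ ψ)) (hφ : φ ∈ continuousIcc φ ψ)
    (hψ : ψ ∈ continuousIcc φ ψ) (n : ℕ) (x : X) : T^[n] φ x ≤ ⨅ k, T^[k] ψ x := by
  refine le_ciInf fun k => ?_
  calc T^[n] φ x ≤ T^[n] (T^[k] ψ) x :=
        hmono.iterate hS n hφ.1 (hI.iterate k hψ).1 (hI.iterate k hψ).2.1 x
    _ = T^[k] (T^[n] ψ) x := by
        rw [← Function.iterate_add_apply, add_comm, Function.iterate_add_apply]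
    _ ≤ T^[k] ψ x := hmono.iterate hS k (hI.iterate n hψ).1 hψ.1 (hI.iterate n hψ).2.2 x

theorem abs_sub_iInf_iterate_le (hS : MapsTo T {w | Continuous w} {w | Continuous w})
    (hmono : MonotoneOn T {w | Continuous w}) (hconc : ConcaveOn ℝ {w | Continuous w} T)
    (hI : MapsTo T (continuousIcc φ ψ) (continuousIcc φ ψ)) (hφ : φ ∈ continuousIcc φ ψ)
    (hψ : ψ ∈ continuousIcc φ ψ) (hε₀ : 0 ≤ ε) (hε₁ : ε ≤ 1)
    (hTφ : ∀ x, φ x + ε * (ψ x - φ x) ≤ T φ x) {n : ℕ} {u : X → ℝ}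
    (hu : T^[n] φ ≤ u ∧ u ≤ T^[n] ψ) (x : X) :
    |u x - ⨅ k, T^[k] ψ x| ≤ (1 - ε) ^ n * (ψ x - φ x) := by
  have hgap := iterate_sub_iterate_le hS hmono hconc hI hφ.1 hψ hε₀ hε₁ hTφ n x
  have hlo := iterate_le_iInf_iterate hS hmono hI hφ hψ n x
  have hhi := iInf_iterate_le hI hψ n x
  exact abs_sub_le_iff.2 ⟨by linarith [hu.2 x], by linarith [hu.1 x]⟩

theorem exists_unique_fixedPoint_of_concaveOn [CompactSpace X]
    (hS : MapsTo T {w | Continuous w} {w | Continuous w})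
    (hmono : MonotoneOn T {w | Continuous w}) (hconc : ConcaveOn ℝ {w | Continuous w} T)
    (hφ : Continuous φ) (hψ : Continuous ψ) (hφψ : ∀ x, φ x ≤ ψ x) (hTψ : ∀ x, T ψ x ≤ ψ x)
    (hε₀ : 0 < ε) (hε₁ : ε ≤ 1) (hTφ : ∀ x, φ x + ε * (ψ x - φ x) ≤ T φ x) :
    ∃ wstar : X → ℝ,
      (Continuous wstar ∧ ∀ x, φ x ≤ wstar x ∧ wstar x ≤ ψ x) ∧
      T wstar = wstar ∧
      (∀ w : X → ℝ, Continuous w → (∀ x, φ x ≤ w x ∧ w x ≤ ψ x) →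
        T w = w → w = wstar) ∧
      (∀ w : X → ℝ, Continuous w → (∀ x, φ x ≤ w x ∧ w x ≤ ψ x) →
        ∃ α M : ℝ, 0 ≤ α ∧ α < 1 ∧ 0 ≤ M ∧
          ∀ (n : ℕ) (x : X), |T^[n] w x - wstar x| ≤ α ^ n * M) := by
  have hφI : φ ∈ continuousIcc φ ψ := ⟨hφ, le_rfl, hφψ⟩
  have hψI : ψ ∈ continuousIcc φ ψ := ⟨hψ, hφψ, le_rfl⟩
  have hI : MapsTo T (continuousIcc φ ψ) (continuousIcc φ ψ) :=
    hmono.mapsTo_inter_Icc hS hφ hψ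
      (fun x => by linarith [hTφ x, mul_nonneg hε₀.le (sub_nonneg.2 (hφψ x))]) hTψ
  have hβ₀ : 0 ≤ 1 - ε := sub_nonneg.2 hε₁
  have hβ₁ : 1 - ε < 1 := sub_lt_self 1 hε₀
  set wstar : X → ℝ := fun x => ⨅ k, T^[k] ψ x
  have hdist : ∀ {n u}, T^[n] φ ≤ u ∧ u ≤ T^[n] ψ →
      ∀ x, |u x - wstar x| ≤ (1 - ε) ^ n * (ψ x - φ x) :=
    abs_sub_iInf_iterate_le hS hmono hconc hI hφI hψI hε₀.le hε₁ hTφ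
  have hlo : ∀ n, T^[n] φ ≤ wstar := iterate_le_iInf_iterate hS hmono hI hφI hψI
  have hhi : ∀ n, wstar ≤ T^[n] ψ := iInf_iterate_le hI hψI
  set gap : C(X, ℝ) := ⟨ψ - φ, hψ.sub hφ⟩
  set M := ‖gap‖
  have hM : ∀ n x, (1 - ε) ^ n * (ψ x - φ x) ≤ (1 - ε) ^ n * M := fun n x =>
    mul_le_mul_of_nonneg_left (gap.apply_le_norm x) (pow_nonneg hβ₀ n)
  have hiter : ∀ w ∈ continuousIcc φ ψ, ∀ n, T^[n] φ ≤ T^[n] w ∧ T^[n] w ≤ T^[n] ψ :=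
    fun w hw n => ⟨hmono.iterate hS n hφ hw.1 hw.2.1, hmono.iterate hS n hw.1 hψ hw.2.2⟩
  have hcont : Continuous wstar :=
    continuous_of_forall_abs_sub_le (fun n => hS.iterate n hψ)
      (by simpa using (tendsto_pow_atTop_nhds_zero_of_lt_one hβ₀ hβ₁).mul_const M)
      fun n x => (hdist (hiter ψ hψI n) x).trans (hM n x)
  refine ⟨wstar, ⟨hcont, fun x => ⟨hlo 0 x, hhi 0 x⟩⟩, ?_, ?_, ?_⟩
  · funext x
    refine eq_of_forall_abs_sub_le_pow_mul (c := (1 - ε) * (ψ x - φ x)) hβ₀ hβ₁ fun n => ?_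
    have hsqueeze : T^[n + 1] φ ≤ T wstar ∧ T wstar ≤ T^[n + 1] ψ := by
      simp only [Function.iterate_succ_apply']
      exact ⟨hmono (hS.iterate n hφ) hcont (hlo n), hmono hcont (hS.iterate n hψ) (hhi n)⟩
    simpa only [pow_succ, mul_assoc] using hdist hsqueeze x
  · intro w hw hwφψ hfix
    funext x
    refine eq_of_forall_abs_sub_le_pow_mul (c := ψ x - φ x) hβ₀ hβ₁ fun n => ?_
    simpa only [Function.iterate_fixed hfix n] using
      hdist (hiter w ⟨hw, fun x => (hwφψ x).1, fun x => (hwφψ x).2⟩ n) x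
  · intro w hw hwφψ
    exact ⟨1 - ε, M, hβ₀, hβ₁, norm_nonneg _, fun n x =>
      (hdist (hiter w ⟨hw, fun x => (hwφψ x).1, fun x => (hwφψ x).2⟩ n) x).trans (hM n x)⟩

end ConcaveOperator

section Bellman

variable {X A : Type*} [TopologicalSpace X] [TopologicalSpace A]

noncomputable def bellman (G : X → Set A) (L : X → A → (X → ℝ) → ℝ) (w : X → ℝ) (x : X) : ℝ :=
  sInf ((fun a => L x a w) '' G x)

variable {G : X → Set A} {L : X → A → (X → ℝ) → ℝ}

theorem bellman_le (hG_cpt : ∀ x, IsCompact (G x)) {w : X → ℝ}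
    (hw : ContinuousOn (fun p : X × A => L p.1 p.2 w) {p : X × A | p.2 ∈ G p.1}) {x : X} {a : A}
    (ha : a ∈ G x) : bellman G L w x ≤ L x a w :=
  (hG_cpt x).sInf_image_le (hw.section_of_graph (f := fun x a => L x a w) x) ha

theorem exists_bellman_eq (hG_ne : ∀ x, (G x).Nonempty) (hG_cpt : ∀ x, IsCompact (G x))
    {w : X → ℝ}
    (hw : ContinuousOn (fun p : X × A => L p.1 p.2 w) {p : X × A | p.2 ∈ G p.1}) (x : X) :
    ∃ a ∈ G x, bellman G L w x = L x a w :=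
  (hG_cpt x).exists_sInf_image_eq (hG_ne x) (hw.section_of_graph (f := fun x a => L x a w) x)

theorem continuous_bellman (hG_uhc : UpperHemicontinuous G) (hG_lhc : LowerHemicontinuous G)
    (hG_ne : ∀ x, (G x).Nonempty) (hG_cpt : ∀ x, IsCompact (G x)) {w : X → ℝ}
    (hw : ContinuousOn (fun p : X × A => L p.1 p.2 w) {p : X × A | p.2 ∈ G p.1}) :
    Continuous (bellman G L w) :=
  continuous_sInf_image_of_hemicontinuous hG_uhc hG_lhc hG_ne hG_cpt hw

theorem monotoneOn_bellman (hG_ne : ∀ x, (G x).Nonempty) (hG_cpt : ∀ x, IsCompact (G x))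
    (hA1 : ∀ w : X → ℝ, Continuous w →
      ContinuousOn (fun p : X × A => L p.1 p.2 w) {p : X × A | p.2 ∈ G p.1})
    (hA2 : ∀ u v : X → ℝ, Continuous u → Continuous v → (∀ x, u x ≤ v x) →
      ∀ x : X, ∀ a ∈ G x, L x a u ≤ L x a v) :
    MonotoneOn (bellman G L) {w | Continuous w} := by
  intro u hu v hv huv x
  obtain ⟨a, ha, heq⟩ := exists_bellman_eq hG_ne hG_cpt (hA1 v hv) x
  calc bellman G L u x ≤ L x a u := bellman_le hG_cpt (hA1 u hu) ha
    _ ≤ L x a v := hA2 u v hu hv huv x a ha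
    _ = bellman G L v x := heq.symm

theorem concaveOn_bellman (hG_ne : ∀ x, (G x).Nonempty) (hG_cpt : ∀ x, IsCompact (G x))
    (hA1 : ∀ w : X → ℝ, Continuous w →
      ContinuousOn (fun p : X × A => L p.1 p.2 w) {p : X × A | p.2 ∈ G p.1})
    (hA3 : ∀ lam : ℝ, lam ∈ Set.Ioo (0 : ℝ) 1 →
      ∀ u v : X → ℝ, Continuous u → Continuous v →
      ∀ x : X, ∀ a ∈ G x,
        lam * L x a u + (1 - lam) * L x a v ≤
          L x a (fun y => lam * u y + (1 - lam) * v y)) :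
    ConcaveOn ℝ {w | Continuous w} (bellman G L) := by
  refine ⟨convex_setOf_continuous, fun u hu v hv s t hs ht hst => ?_⟩
  obtain rfl : t = 1 - s := by linarith
  rcases hs.eq_or_lt with rfl | hs
  · simp
  rcases ht.eq_or_lt with ht | ht
  · obtain rfl : s = 1 := by linarith
    simp
  intro x
  have hmix : Continuous (s • u + (1 - s) • v) := (hu.const_smul s).add (hv.const_smul _)
  obtain ⟨a, ha, heq⟩ := exists_bellman_eq hG_ne hG_cpt (hA1 _ hmix) x
  calc s * bellman G L u x + (1 - s) * bellman G L v x ≤ s * L x a u + (1 - s) * L x a v := by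
        gcongr
        exacts [bellman_le hG_cpt (hA1 u hu) ha, bellman_le hG_cpt (hA1 v hv) ha]
    _ ≤ L x a (s • u + (1 - s) • v) := hA3 s ⟨hs, by linarith⟩ u v hu hv x a ha
    _ = bellman G L (s • u + (1 - s) • v) x := heq.symm

end Bellman

/-- for a dynamic program `(L, G)` satisfying assumptions A₁–A₅, the
Bellman operator `T` has a unique fixed point `w*` in
`𝓘 = { f : X → ℝ continuous, φ ≤ f ≤ ψ }`, and for each `w ∈ 𝓘` there exist `α ∈ [0,1)`
and `M < ∞` with `‖Tⁿw − w*‖_∞ ≤ αⁿ M` for all `n`. -/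
theorem general_bellman_unique_fixed_point
    {X A : Type*} [MetricSpace X] [CompactSpace X] [MetricSpace A]
    (G : X → Set A)
    (hG_ne : ∀ x, (G x).Nonempty)
    (hG_cpt : ∀ x, IsCompact (G x))
    (hG_uhc : ∀ x : X, ∀ U : Set A, IsOpen U → G x ⊆ U →
      ∀ᶠ x' in nhds x, G x' ⊆ U)
    (hG_lhc : ∀ x : X, ∀ U : Set A, IsOpen U → (G x ∩ U).Nonempty →
      ∀ᶠ x' in nhds x, (G x' ∩ U).Nonempty)
    (L : X → A → (X → ℝ) → ℝ)
    (T : (X → ℝ) → (X → ℝ))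
    (hT : ∀ (w : X → ℝ) (x : X), T w x = sInf ((fun a => L x a w) '' G x))
    -- A₁: continuity of the aggregator in (x, a)
    (hA1 : ∀ w : X → ℝ, Continuous w →
      ContinuousOn (fun p : X × A => L p.1 p.2 w) {p : X × A | p.2 ∈ G p.1})
    -- A₂: monotonicity of the aggregator in the continuation value
    (hA2 : ∀ u v : X → ℝ, Continuous u → Continuous v → (∀ x, u x ≤ v x) →
      ∀ x : X, ∀ a ∈ G x, L x a u ≤ L x a v)
    -- A₃: concavity of the aggregator in the continuation value
    (hA3 : ∀ lam : ℝ, lam ∈ Set.Ioo (0 : ℝ) 1 →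
      ∀ u v : X → ℝ, Continuous u → Continuous v →
      ∀ x : X, ∀ a ∈ G x,
        lam * L x a u + (1 - lam) * L x a v ≤
          L x a (fun y => lam * u y + (1 - lam) * v y))
    -- A₄ and A₅: upper and lower bound functions
    (φ ψ : X → ℝ) (hφ : Continuous φ) (hψ : Continuous ψ)
    (hφψ : ∀ x, φ x ≤ ψ x)
    (hA4 : ∀ x, T ψ x ≤ ψ x)
    (ε : ℝ) (hε : 0 < ε)
    (hA5 : ∀ x, φ x + ε * (ψ x - φ x) ≤ T φ x) :
    ∃ wstar : X → ℝ,
      (Continuous wstar ∧ ∀ x, φ x ≤ wstar x ∧ wstar x ≤ ψ x) ∧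
      T wstar = wstar ∧
      (∀ w : X → ℝ, Continuous w → (∀ x, φ x ≤ w x ∧ w x ≤ ψ x) →
        T w = w → w = wstar) ∧
      (∀ w : X → ℝ, Continuous w → (∀ x, φ x ≤ w x ∧ w x ≤ ψ x) →
        ∃ α M : ℝ, 0 ≤ α ∧ α < 1 ∧ 0 ≤ M ∧
          ∀ (n : ℕ) (x : X), |T^[n] w x - wstar x| ≤ α ^ n * M) := by
  obtain rfl : T = bellman G L := funext fun w => funext (hT w)
  have hG_uhc' : UpperHemicontinuous G := upperHemicontinuous_iff_forall_isOpen.2 hG_uhc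
  have hG_lhc' : LowerHemicontinuous G := fun x => lowerHemicontinuousAt_iff.2 (hG_lhc x)
  exact exists_unique_fixedPoint_of_concaveOn
    (fun w hw => continuous_bellman hG_uhc' hG_lhc' hG_ne hG_cpt (hA1 w hw))
    (monotoneOn_bellman hG_ne hG_cpt hA1 hA2) (concaveOn_bellman hG_ne hG_cpt hA1 hA3)
    hφ hψ hφψ hA4 (lt_min hε one_pos) (min_le_right ε 1) fun x =>
      le_trans (by gcongr; exacts [sub_nonneg.2 (hφψ x), min_le_left ε 1]) (hA5 x)
end

section
/- Let X be a compact metric space and E = C(X, ℝ) the Banach space of continuous real-valued functions on X with the supremum norm, partially ordered pointwise. Let u₀, v₀ ∈ E with u₀ ≤ v₀ and u₀ ≠ v₀, and let A : [u₀, v₀] → E be an increasing (order-preserving) and concave operator (A(λx + (1−λ)y) ≥ λAx + (1−λ)Ay for λ ∈ [0,1]). If there is ε ∈ (0, 1) with Au₀ ≥ u₀ + ε(v₀ − u₀) and Av₀ ≤ v₀, then A has a unique fixed point x* in the order interval [u₀, v₀], and for every x ∈ [u₀, v₀] there exists M > 0 such that ‖Aⁿx − x*‖ ≤ M·(1 −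 ε)ⁿ for all n ∈ ℕ. -/
open Set Filter

/-- Du's fixed point theorem on `C(X, ℝ)`: let `X` be a compact metric
space and `E = C(X, ℝ)` with the sup norm and pointwise order. If `u₀ ≤ v₀`, `u₀ ≠ v₀`,
and `A` is increasing and concave on the order interval `[u₀, v₀]` with
`Au₀ ≥ u₀ + ε(v₀ − u₀)` for some `ε ∈ (0, 1)` and `Av₀ ≤ v₀`, then `A` has a unique fixed
point `x*` in `[u₀, v₀]`, and for every `x ∈ [u₀, v₀]` there is `M > 0` with
`‖Aⁿx − x*‖ ≤ M (1 − ε)ⁿ` for all `n`. -/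
theorem du_fixed_point_theorem
    {X : Type*} [MetricSpace X] [CompactSpace X]
    (u₀ v₀ : C(X, ℝ)) (hle : u₀ ≤ v₀) (hne : u₀ ≠ v₀)
    (A : C(X, ℝ) → C(X, ℝ))
    (hmono : ∀ x y : C(X, ℝ), u₀ ≤ x → x ≤ v₀ → u₀ ≤ y → y ≤ v₀ → x ≤ y → A x ≤ A y)
    (hconc : ∀ x y : C(X, ℝ), u₀ ≤ x → x ≤ v₀ → u₀ ≤ y → y ≤ v₀ →
      ∀ lam : ℝ, lam ∈ Set.Icc (0 : ℝ) 1 →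
        lam • A x + (1 - lam) • A y ≤ A (lam • x + (1 - lam) • y))
    (ε : ℝ) (hε0 : 0 < ε) (hε1 : ε < 1)
    (hAu : u₀ + ε • (v₀ - u₀) ≤ A u₀)
    (hAv : A v₀ ≤ v₀) :
    ∃ xstar : C(X, ℝ),
      u₀ ≤ xstar ∧ xstar ≤ v₀ ∧ A xstar = xstar ∧
      (∀ y : C(X, ℝ), u₀ ≤ y → y ≤ v₀ → A y = y → y = xstar) ∧
      (∀ x : C(X, ℝ), u₀ ≤ x → x ≤ v₀ →
        ∃ M : ℝ, 0 < M ∧ ∀ n : ℕ, ‖A^[n] x - xstar‖ ≤ M * (1 - ε) ^ n) := by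
  set u : ℕ → C(X, ℝ) := fun n => A^[n] u₀ with hu_def
  set v : ℕ → C(X, ℝ) := fun n => A^[n] v₀ with hv_def
  have hu_succ : ∀ n, u (n + 1) = A (u n) := fun n => Function.iterate_succ_apply' A n u₀
  have hv_succ : ∀ n, v (n + 1) = A (v n) := fun n => Function.iterate_succ_apply' A n v₀
  have hu0 : u 0 = u₀ := rfl
  have hv0 : v 0 = v₀ := rfl
  have hεle : (0 : ℝ) < 1 - ε := by linarith
  have ht0 : ∀ n, (0 : ℝ) < (1 - ε) ^ n := fun n => pow_pos hεle n
  have ht1 : ∀ n, (1 - ε) ^ n ≤ 1 := fun n => pow_le_one₀ (by linarith) (by linarith)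
  have hle' : ∀ s, u₀ s ≤ v₀ s := fun s => ContinuousMap.le_def.mp hle s
  have hAu' : ∀ s, u₀ s + ε * (v₀ s - u₀ s) ≤ A u₀ s := by
    intro s
    have := ContinuousMap.le_def.mp hAu s
    simpa using this
  -- `u₀ ≤ A u₀`
  have hAu0 : u₀ ≤ A u₀ := by
    rw [ContinuousMap.le_def]
    intro s
    have := hAu' s
    nlinarith [hle' s]
  -- the grand induction
  have main : ∀ n, (u₀ ≤ u n) ∧ (u n ≤ v n) ∧ (v n ≤ v₀) ∧ (u n ≤ u (n + 1)) ∧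
      (v (n + 1) ≤ v n) ∧ (∀ s, v n s - u n s ≤ (1 - ε) ^ n * (v n s - u₀ s)) := by
    intro n
    induction n with
    | zero =>
      refine ⟨le_rfl, hle, le_rfl, ?_, ?_, ?_⟩
      · rw [hu_succ 0, hu0]; exact hAu0
      · rw [hv_succ 0, hv0]; exact hAv
      · intro s; rw [pow_zero, one_mul, hu0]
    | succ n ih =>
      obtain ⟨h1, h2, h3, h4, h5, h6⟩ := ih
      have hunv₀ : u n ≤ v₀ := h2.trans h3
      have hu₀vn : u₀ ≤ v n := h1.trans h2
      have h1' : u₀ ≤ u (n + 1) := h1.trans h4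
      have h2' : u (n + 1) ≤ v (n + 1) := by
        rw [hu_succ, hv_succ]
        exact hmono (u n) (v n) h1 hunv₀ hu₀vn h3 h2
      have h3' : v (n + 1) ≤ v₀ := h5.trans h3
      have hun1v₀ : u (n + 1) ≤ v₀ := h2'.trans h3'
      have hu₀vn1 : u₀ ≤ v (n + 1) := h1'.trans h2'
      have h4' : u (n + 1) ≤ u (n + 2) := by
        rw [hu_succ n, hu_succ (n + 1)]
        exact hmono (u n) (u (n + 1)) h1 hunv₀ h1' hun1v₀ h4
      have h5' : v (n + 2) ≤ v (n + 1) := by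
        rw [hv_succ n, hv_succ (n + 1)]
        exact hmono (v (n + 1)) (v n) hu₀vn1 h3' hu₀vn h3 h5
      refine ⟨h1', h2', h3', h4', h5', ?_⟩
      -- the key concavity estimate
      set t : ℝ := (1 - ε) ^ n with htdef
      have ht0' : 0 < t := ht0 n
      have ht1' : t ≤ 1 := ht1 n
      set lam : ℝ := 1 - t with hlamdef
      have hlam : lam ∈ Set.Icc (0 : ℝ) 1 := ⟨by linarith, by linarith⟩
      set w : C(X, ℝ) := lam • v n + (1 - lam) • u₀ with hwdef
      have hw_apply : ∀ s, w s = lam * v n s + (1 - lam) * u₀ s := by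
        intro s; simp [hwdef]
      have hw1 : u₀ ≤ w := by
        rw [ContinuousMap.le_def]
        intro s
        rw [hw_apply s]
        have hv : u₀ s ≤ v n s := ContinuousMap.le_def.mp hu₀vn s
        nlinarith
      have hw2 : w ≤ v₀ := by
        rw [ContinuousMap.le_def]
        intro s
        rw [hw_apply s]
        have hv : v n s ≤ v₀ s := ContinuousMap.le_def.mp h3 s
        nlinarith [hle' s]
      have hwu : w ≤ u n := by
        rw [ContinuousMap.le_def]
        intro s
        rw [hw_apply s]
        have hkey := h6 s
        have := ContinuousMap.le_def.mp h2 s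
        simp only [hlamdef]
        nlinarith
      have hconc' : lam • A (v n) + (1 - lam) • A u₀ ≤ A w :=
        hconc (v n) u₀ hu₀vn h3 le_rfl hle lam hlam
      have hmono' : A w ≤ A (u n) := hmono w (u n) hw1 hw2 h1 hunv₀ hwu
      have hfinal : lam • A (v n) + (1 - lam) • A u₀ ≤ u (n + 1) := by
        rw [hu_succ]
        exact hconc'.trans hmono'
      intro s
      have hf : lam * (A (v n)) s + (1 - lam) * (A u₀) s ≤ u (n + 1) s := by
        have := ContinuousMap.le_def.mp hfinal s
        simpa using this
      have hAu's := hAu' s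
      have hvn1 : v (n + 1) s ≤ v₀ s := ContinuousMap.le_def.mp h3' s
      have hvA : v (n + 1) s = (A (v n)) s := by rw [hv_succ]
      have hu₀vn1' : u₀ s ≤ v (n + 1) s := ContinuousMap.le_def.mp hu₀vn1 s
      rw [pow_succ]
      have hAu0s : u₀ s + ε * (v₀ s - u₀ s) ≤ (A u₀) s := hAu's
      simp only [hlamdef] at hf
      nlinarith [mul_nonneg (mul_nonneg ht0'.le hε0.le) (sub_nonneg.mpr hvn1)]
  have humono : Monotone u := monotone_nat_of_le_succ fun n => (main n).2.2.2.1
  have hvanti : Antitone v := antitone_nat_of_succ_le fun n => (main n).2.2.2.2.1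
  set C : ℝ := ‖v₀ - u₀‖ with hCdef
  have hCpos : 0 < C := by
    rw [hCdef, norm_pos_iff]
    exact sub_ne_zero.mpr (Ne.symm hne)
  have hvuC : ∀ s, v₀ s - u₀ s ≤ C := by
    intro s
    calc v₀ s - u₀ s ≤ |v₀ s - u₀ s| := le_abs_self _
      _ = ‖(v₀ - u₀) s‖ := by simp [Real.norm_eq_abs]
      _ ≤ C := ContinuousMap.norm_coe_le_norm _ s
  have key2 : ∀ n s, v n s - u n s ≤ (1 - ε) ^ n * C := by
    intro n s
    have h6 := (main n).2.2.2.2.2 s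
    have h3 : v n s ≤ v₀ s := ContinuousMap.le_def.mp (main n).2.2.1 s
    have h1 : u₀ s ≤ u n s := ContinuousMap.le_def.mp (main n).1 s
    have : v n s - u₀ s ≤ C := by
      have := hvuC s; linarith
    calc v n s - u n s ≤ (1 - ε) ^ n * (v n s - u₀ s) := h6
      _ ≤ (1 - ε) ^ n * C := by
        apply mul_le_mul_of_nonneg_left this (ht0 n).le
  -- norm bound between any two elements trapped in `[u n, v n]`
  have hnorm : ∀ (n : ℕ) (f g : C(X, ℝ)), u n ≤ f → f ≤ v n → u n ≤ g → g ≤ v n →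
      ‖f - g‖ ≤ (1 - ε) ^ n * C := by
    intro n f g hf1 hf2 hg1 hg2
    rw [ContinuousMap.norm_le _ (by positivity)]
    intro s
    have h1 := ContinuousMap.le_def.mp hf1 s
    have h2 := ContinuousMap.le_def.mp hf2 s
    have h3 := ContinuousMap.le_def.mp hg1 s
    have h4 := ContinuousMap.le_def.mp hg2 s
    have h5 := key2 n s
    simp only [ContinuousMap.sub_apply, Real.norm_eq_abs]
    rw [abs_le]
    constructor <;> linarith
  -- Cauchy sequence
  have hcauchy : CauchySeq u := by
    apply cauchySeq_of_le_geometric (1 - ε) C (by linarith)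
    intro n
    rw [dist_eq_norm]
    have := hnorm n (u n) (u (n + 1)) le_rfl (main n).2.1 (main n).2.2.2.1
      ((main (n + 1)).2.1.trans (main n).2.2.2.2.1)
    calc ‖u n - u (n + 1)‖ ≤ (1 - ε) ^ n * C := this
      _ = C * (1 - ε) ^ n := mul_comm _ _
  obtain ⟨xstar, hxlim⟩ := cauchySeq_tendsto_of_complete hcauchy
  have hptw : ∀ s, Tendsto (fun n => u n s) atTop (nhds (xstar s)) := by
    intro s
    exact ((continuous_eval_const s).tendsto xstar).comp hxlim
  -- `xstar` is trapped: `u n ≤ xstar ≤ v n` for all `n`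
  have hxb : ∀ n, u n ≤ xstar ∧ xstar ≤ v n := by
    intro n
    constructor
    · rw [ContinuousMap.le_def]
      intro s
      apply ge_of_tendsto (hptw s)
      filter_upwards [eventually_ge_atTop n] with m hm
      exact ContinuousMap.le_def.mp (humono hm) s
    · rw [ContinuousMap.le_def]
      intro s
      apply le_of_tendsto (hptw s)
      filter_upwards [eventually_ge_atTop n] with m hm
      have h1 := ContinuousMap.le_def.mp (main m).2.1 s
      have h2 := ContinuousMap.le_def.mp (hvanti hm) s
      linarith
  have hxs1 : u₀ ≤ xstar := (hxb 0).1
  have hxs2 : xstar ≤ v₀ := (hxb 0).2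
  have hlimC : Tendsto (fun n => (1 - ε) ^ n * C) atTop (nhds 0) := by
    have := (tendsto_pow_atTop_nhds_zero_of_lt_one (by linarith : (0:ℝ) ≤ 1 - ε)
      (by linarith)).mul_const C
    simpa using this
  -- anything trapped in all `[u n, v n]` equals `xstar`
  have hsq : ∀ y : C(X, ℝ), (∀ n, u n ≤ y) → (∀ n, y ≤ v n) → y = xstar := by
    intro y hy1 hy2
    ext s
    have hd : ∀ n, |y s - xstar s| ≤ (1 - ε) ^ n * C := by
      intro n
      have h1 := ContinuousMap.le_def.mp (hy1 n) s
      have h2 := ContinuousMap.le_def.mp (hy2 n) s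
      have h3 := ContinuousMap.le_def.mp (hxb n).1 s
      have h4 := ContinuousMap.le_def.mp (hxb n).2 s
      have h5 := key2 n s
      rw [abs_le]
      constructor <;> linarith
    have h0 : |y s - xstar s| ≤ 0 := ge_of_tendsto' hlimC hd
    have := abs_nonpos_iff.mp h0
    linarith [sub_eq_zero.mp this]
  -- fixed point property
  have hfix1 : ∀ n, u n ≤ A xstar := by
    intro n
    refine (main n).2.2.2.1.trans ?_
    rw [hu_succ]
    exact hmono (u n) xstar (main n).1 ((main n).2.1.trans (main n).2.2.1) hxs1 hxs2 (hxb n).1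
  have hfix2 : ∀ n, A xstar ≤ v n := by
    intro n
    refine le_trans ?_ (main n).2.2.2.2.1
    rw [hv_succ]
    exact hmono xstar (v n) hxs1 hxs2 ((main n).1.trans (main n).2.1) (main n).2.2.1 (hxb n).2
  have hfix : A xstar = xstar := hsq (A xstar) hfix1 hfix2
  refine ⟨xstar, hxs1, hxs2, hfix, ?_, ?_⟩
  · -- uniqueness
    intro y hy1 hy2 hyfix
    have htrap : ∀ n, u n ≤ y ∧ y ≤ v n := by
      intro n
      induction n with
      | zero => exact ⟨hy1, hy2⟩
      | succ n ih =>
        constructor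
        · rw [hu_succ, ← hyfix]
          exact hmono (u n) y (main n).1 ((main n).2.1.trans (main n).2.2.1) hy1 hy2 ih.1
        · rw [hv_succ, ← hyfix]
          exact hmono y (v n) hy1 hy2 ((main n).1.trans (main n).2.1) (main n).2.2.1 ih.2
    exact hsq y (fun n => (htrap n).1) (fun n => (htrap n).2)
  · -- convergence rate
    intro x hx1 hx2
    have htrap : ∀ n, u n ≤ A^[n] x ∧ A^[n] x ≤ v n := by
      intro n
      induction n with
      | zero => exact ⟨hx1, hx2⟩
      | succ n ih =>
        have hxa : u₀ ≤ A^[n] x := (main n).1.trans ih.1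
        have hxb' : A^[n] x ≤ v₀ := ih.2.trans (main n).2.2.1
        rw [Function.iterate_succ_apply' A n x]
        constructor
        · rw [hu_succ]
          exact hmono (u n) (A^[n] x) (main n).1 ((main n).2.1.trans (main n).2.2.1) hxa hxb' ih.1
        · rw [hv_succ]
          exact hmono (A^[n] x) (v n) hxa hxb' ((main n).1.trans (main n).2.1) (main n).2.2.1 ih.2
    refine ⟨C, hCpos, ?_⟩
    intro n
    have := hnorm n (A^[n] x) xstar (htrap n).1 (htrap n).2 (hxb n).1 (hxb n).2
    calc ‖A^[n] x - xstar‖ ≤ (1 - ε) ^ n * C := this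
      _ = C * (1 - ε) ^ n := mul_comm _ _
end
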